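/- With the setup of the previous lemma, let 𝒳 be the family of inclusion-minimal sets among {R(v) : v ∈ V_0}, where V_0 is the set of vertices v for which S_v exists and |S_v| ≤ t. Then any two distinct members A, B of 𝒳 are disjoint. -/

import Mathlib

open SimpleGraph

/-- Open neighborhood of a vertex set: vertices outside `X` adjacent to some vertex of `X`. -/
def vb {V : Type*} (G : SimpleGraph V) (X : Set V) : Set V :=
  {v | v ∉ X ∧ ∃ u ∈ X, G.Adj u v}

/-- Vertices reachable from the set `X` in `G - S`. -/
def reachAvoid {V : Type*} (G : SimpleGraph V) (S X : Set V) : Set V :=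
  {v | ∃ x ∈ X, ∃ p : G.Walk x v, ∀ w ∈ p.support, w ∉ S}

/-- `S` is a vertex `(X,Y)`-separator. -/
def isSep {V : Type*} (G : SimpleGraph V) (X Y S : Set V) : Prop :=
  S ⊆ (X ∪ Y)ᶜ ∧ ∀ y ∈ Y, y ∉ reachAvoid G S X

/-- `S` is an important `(X,Y)`-separator. -/
def isImpSep {V : Type*} (G : SimpleGraph V) (X Y S : Set V) : Prop :=
  isSep G X Y S ∧ (∀ S' ⊂ S, ¬ isSep G X Y S') ∧
    ¬ ∃ T, isSep G X Y T ∧ T.ncard ≤ S.ncard ∧ reachAvoid G S X ⊂ reachAvoid G T X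

section helpers
variable {V : Type*} {G : SimpleGraph V} {S X : Set V} {x y z v : V}

lemma mem_reach_self (hx : x ∈ X) (h : x ∉ S) : x ∈ reachAvoid G S X :=
  ⟨x, hx, Walk.nil, by intro w hw; simp only [Walk.support_nil, List.mem_singleton] at hw; subst hw; exact h⟩

lemma reach_not_mem (h : v ∈ reachAvoid G S X) : v ∉ S := by
  obtain ⟨x, hx, p, hp⟩ := h
  exact hp v p.end_mem_support

lemma reach_trans (hy : y ∈ reachAvoid G S X) (hz : z ∈ reachAvoid G S {y}) :
    z ∈ reachAvoid G S X := by
  obtain ⟨x, hx, p, hp⟩ := hy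
  obtain ⟨y', hy', q, hq⟩ := hz
  rw [Set.mem_singleton_iff] at hy'; subst hy'
  refine ⟨x, hx, p.append q, ?_⟩
  intro w hw
  rcases (Walk.mem_support_append_iff _ _).1 hw with h | h
  · exact hp w h
  · exact hq w h

lemma support_mem_reach (hx : x ∈ X) (p : G.Walk x v) (hp : ∀ w ∈ p.support, w ∉ S)
    (hw : y ∈ p.support) : y ∈ reachAvoid G S X := by
  classical
  exact ⟨x, hx, p.takeUntil y hw, fun w h => hp w (Walk.support_takeUntil_subset _ _ h)⟩

lemma vb_reach_subset : vb G (reachAvoid G S X) ⊆ S := by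
  rintro z ⟨hz, y, hy, hadj⟩
  by_contra hzS
  obtain ⟨x, hx, p, hp⟩ := hy
  refine hz ⟨x, hx, p.concat hadj, ?_⟩
  intro w hw
  rw [Walk.support_concat, List.mem_append, List.mem_singleton] at hw
  rcases hw with h | h
  · exact hp w h
  · subst h; exact hzS

lemma walk_confine {R T : Set V} (hcl : ∀ y ∈ R, ∀ z, G.Adj y z → z ∈ R ∨ z ∈ T)
    {x v : V} (p : G.Walk x v) (hx : x ∈ R) (hp : ∀ w ∈ p.support, w ∉ T) : v ∈ R := by
  induction p with
  | nil => exact hx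
  | @cons x' y' v' h q ih =>
    have hy : y' ∈ R := by
      rcases hcl x' hx y' h with h' | h'
      · exact h'
      · exact absurd h' (hp y' (by simp))
    exact ih hy (fun w hw => hp w (by simp [hw]))

lemma reach_vb_subset {R X : Set V} (hX : X ⊆ R) : reachAvoid G (vb G R) X ⊆ R := by
  rintro v ⟨x, hx, p, hp⟩
  refine walk_confine ?_ p (hX hx) hp
  intro y hy z hadj
  by_cases hz : z ∈ R
  · exact Or.inl hz
  · exact Or.inr ⟨hz, y, hy, hadj⟩

lemma vb_submod {V : Type*} [Fintype V] (G : SimpleGraph V) (P Q : Set V) :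
    (vb G (P ∪ Q)).ncard + (vb G (P ∩ Q)).ncard ≤ (vb G P).ncard + (vb G Q).ncard := by
  have h1 : vb G (P ∪ Q) ∪ vb G (P ∩ Q) ⊆ vb G P ∪ vb G Q := by
    rintro x (⟨hx, y, hy, hadj⟩ | ⟨hx, y, hy, hadj⟩)
    · rcases hy with hy | hy
      · exact Or.inl ⟨fun h => hx (Or.inl h), y, hy, hadj⟩
      · exact Or.inr ⟨fun h => hx (Or.inr h), y, hy, hadj⟩
    · by_cases hxP : x ∈ P
      · exact Or.inr ⟨fun h => hx ⟨hxP, h⟩, y, hy.2, hadj⟩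
      · exact Or.inl ⟨hxP, y, hy.1, hadj⟩
  have h2 : vb G (P ∪ Q) ∩ vb G (P ∩ Q) ⊆ vb G P ∩ vb G Q := by
    rintro x ⟨⟨hx, _⟩, ⟨_, y, hy, hadj⟩⟩
    exact ⟨⟨fun h => hx (Or.inl h), y, hy.1, hadj⟩, ⟨fun h => hx (Or.inr h), y, hy.2, hadj⟩⟩
  calc (vb G (P ∪ Q)).ncard + (vb G (P ∩ Q)).ncard
      = (vb G (P ∪ Q) ∪ vb G (P ∩ Q)).ncard + (vb G (P ∪ Q) ∩ vb G (P ∩ Q)).ncard := by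
        rw [Set.ncard_union_add_ncard_inter]
    _ ≤ (vb G P ∪ vb G Q).ncard + (vb G P ∩ vb G Q).ncard :=
        Nat.add_le_add (Set.ncard_le_ncard h1 (Set.toFinite _)) (Set.ncard_le_ncard h2 (Set.toFinite _))
    _ = (vb G P).ncard + (vb G Q).ncard := by rw [Set.ncard_union_add_ncard_inter]

end helpers

section keylem
variable {V : Type*} [Fintype V] {G : SimpleGraph V}

lemma sep_not_mem_left {a u : V} {S : Set V} (h : isSep G {a} {u} S) : a ∉ S :=
  fun hm => (h.1 hm) (Or.inl rfl)

lemma sep_not_mem_right {a u : V} {S : Set V} (h : isSep G {a} {u} S) : u ∉ S :=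
  fun hm => (h.1 hm) (Or.inr rfl)

/-- If `Sa` separates `a` from `u` and `w` is reachable, then `Sa` also separates `w` from `u`. -/
lemma sep_of_reach {a w u : V} {Sa : Set V} (hSa : isSep G {a} {u} Sa)
    (hw : w ∈ reachAvoid G Sa {a}) : isSep G {w} {u} Sa := by
  constructor
  · intro x hx
    rintro (hx' | hx')
    · simp only [Set.mem_singleton_iff] at hx'; subst hx'; exact reach_not_mem hw hx
    · simp only [Set.mem_singleton_iff] at hx'; subst hx'; exact sep_not_mem_right hSa hx
  · intro y hy hreach
    exact hSa.2 y hy (reach_trans hw hreach)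

/-- Key lemma: if `w ∈ R(a)` then `R(w) ⊆ R(a)`. -/
lemma reach_subset_reach {a w u : V} {Sa Sw : Set V}
    (hSa : isSep G {a} {u} Sa)
    (hSaImp : ¬ ∃ T, isSep G {a} {u} T ∧ T.ncard ≤ Sa.ncard ∧
      reachAvoid G Sa {a} ⊂ reachAvoid G T {a})
    (hSw : isSep G {w} {u} Sw)
    (hSwMin : ∀ T, isSep G {w} {u} T → Sw.ncard ≤ T.ncard)
    (hw : w ∈ reachAvoid G Sa {a}) :
    reachAvoid G Sw {w} ⊆ reachAvoid G Sa {a} := by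
  set P := reachAvoid G Sw {w} with hPdef
  set Q := reachAvoid G Sa {a} with hQdef
  have hwP : w ∈ P := mem_reach_self rfl (sep_not_mem_left hSw)
  have haQ : a ∈ Q := mem_reach_self rfl (sep_not_mem_left hSa)
  have huP : u ∉ P := hSw.2 u rfl
  have huQ : u ∉ Q := hSa.2 u rfl
  have hvbP : vb G P ⊆ Sw := vb_reach_subset
  have hvbQ : vb G Q ⊆ Sa := vb_reach_subset
  set I := vb G (P ∩ Q) with hIdef
  set T := vb G (P ∪ Q) with hTdef
  have hI_sub : I ⊆ Sw ∪ Sa := by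
    rintro x ⟨hx, y, hy, hadj⟩
    by_cases hxP : x ∈ P
    · exact Or.inr (hvbQ ⟨fun h => hx ⟨hxP, h⟩, y, hy.2, hadj⟩)
    · exact Or.inl (hvbP ⟨hxP, y, hy.1, hadj⟩)
  have hT_sub : T ⊆ Sw ∪ Sa := by
    rintro x ⟨hx, y, hy, hadj⟩
    rcases hy with hy | hy
    · exact Or.inl (hvbP ⟨fun h => hx (Or.inl h), y, hy, hadj⟩)
    · exact Or.inr (hvbQ ⟨fun h => hx (Or.inr h), y, hy, hadj⟩)
  -- I is a (w,u)-separator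
  have hwSa : w ∉ Sa := reach_not_mem hw
  have sep_I : isSep G {w} {u} I := by
    constructor
    · intro x hx
      rintro (hx' | hx')
      · simp only [Set.mem_singleton_iff] at hx'; subst hx'
        exact hx.1 ⟨hwP, hw⟩
      · simp only [Set.mem_singleton_iff] at hx'; subst hx'
        rcases hI_sub hx with h | h
        · exact sep_not_mem_right hSw h
        · exact sep_not_mem_right hSa h
    · intro y hy hreach
      have hyu : y = u := hy
      rw [hyu] at hreach
      have : u ∈ P ∩ Q := reach_vb_subset (by simp [hwP, hw]) hreach
      exact huQ this.2
  have h1 : Sw.ncard ≤ I.ncard := hSwMin I sep_I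
  -- T is an (a,u)-separator
  have sep_T : isSep G {a} {u} T := by
    constructor
    · intro x hx
      rintro (hx' | hx')
      · simp only [Set.mem_singleton_iff] at hx'; subst hx'
        exact hx.1 (Or.inr haQ)
      · simp only [Set.mem_singleton_iff] at hx'; subst hx'
        rcases hT_sub hx with h | h
        · exact sep_not_mem_right hSw h
        · exact sep_not_mem_right hSa h
    · intro y hy hreach
      have hyu : y = u := hy
      rw [hyu] at hreach
      have : u ∈ P ∪ Q := reach_vb_subset (by simp [haQ]) hreach
      rcases this with h | h
      · exact huP h
      · exact huQ h
  -- |T| ≤ |Sa|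
  have hTcard : T.ncard ≤ Sa.ncard := by
    have hsm : T.ncard + I.ncard ≤ (vb G P).ncard + (vb G Q).ncard := vb_submod G P Q
    have h2 : (vb G P).ncard ≤ Sw.ncard := Set.ncard_le_ncard hvbP (Set.toFinite _)
    have h3 : (vb G Q).ncard ≤ Sa.ncard := Set.ncard_le_ncard hvbQ (Set.toFinite _)
    omega
  -- P ∪ Q ⊆ reach(T, {a})
  have hTQ : ∀ x ∈ T, x ∉ Q := fun x hx => fun h => hx.1 (Or.inr h)
  have hTP : ∀ x ∈ T, x ∉ P := fun x hx => fun h => hx.1 (Or.inl h)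
  have hQsub : Q ⊆ reachAvoid G T {a} := by
    rintro q ⟨a', ha', p, hp⟩
    obtain rfl : a = a' := (Set.mem_singleton_iff.1 ha').symm
    refine ⟨a, rfl, p, fun x hx hxT => hTQ x hxT (support_mem_reach rfl p hp hx)⟩
  have hPsub : P ⊆ reachAvoid G T {a} := by
    rintro v ⟨w', hw', p, hp⟩
    obtain rfl : w = w' := (Set.mem_singleton_iff.1 hw').symm
    have hvw : v ∈ reachAvoid G T {w} :=
      ⟨w, rfl, p, fun x hx hxT => hTP x hxT (support_mem_reach rfl p hp hx)⟩
    exact reach_trans (hQsub hw) hvw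
  -- conclude
  intro v hvP
  by_contra hvQ
  exact hSaImp ⟨T, sep_T, hTcard, ⟨hQsub, fun hcon => hvQ (hcon (hPsub hvP))⟩⟩

end keylem

/-- Edge boundary of a vertex set. -/
def edgeBoundary {V : Type*} (G : SimpleGraph V) (X : Set V) : Set (Sym2 V) :=
  {e | ∃ a b, e = s(a, b) ∧ G.Adj a b ∧ a ∈ X ∧ b ∉ X}

/-- Lemma 4: distinct inclusion-minimal sets `R(v)`, `v ∈ V₀`, are disjoint. -/
theorem R_disjoint {V : Type*} [Fintype V] (G : SimpleGraph V) (u : V) (t : ℕ)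
    (Sv : V → Set V)
    (hSv : ∀ v, (∃ S, isSep G {v} {u} S) →
      isSep G {v} {u} (Sv v) ∧
      (∀ T, isSep G {v} {u} T → (Sv v).ncard ≤ T.ncard) ∧
      ¬ ∃ T, isSep G {v} {u} T ∧ T.ncard ≤ (Sv v).ncard ∧
        reachAvoid G (Sv v) {v} ⊂ reachAvoid G T {v})
    (V0 : Set V) (hV0 : V0 = {v | (∃ S, isSep G {v} {u} S) ∧ (Sv v).ncard ≤ t})
    (famX : Set (Set V))
    (hfam : famX = {A | ∃ v ∈ V0, A = reachAvoid G (Sv v) {v} ∧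
      ∀ w ∈ V0, ¬ (reachAvoid G (Sv w) {w} ⊂ A)})
    (A B : Set V) (hA : A ∈ famX) (hB : B ∈ famX) (hAB : A ≠ B) :
    Disjoint A B := by
  rw [hfam] at hA hB
  obtain ⟨a, haV0, hAeq, hAmin⟩ := hA
  obtain ⟨b, hbV0, hBeq, hBmin⟩ := hB
  rw [Set.disjoint_left]
  intro w hwA hwB
  -- unpack membership of a, b in V0
  have haV0' := haV0; have hbV0' := hbV0
  rw [hV0] at haV0' hbV0'
  obtain ⟨hexa, hcarda⟩ := haV0'
  obtain ⟨hexb, hcardb⟩ := hbV0'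
  obtain ⟨hSa_sep, hSa_min, hSa_imp⟩ := hSv a hexa
  obtain ⟨hSb_sep, hSb_min, hSb_imp⟩ := hSv b hexb
  rw [hAeq] at hwA
  rw [hBeq] at hwB
  -- Sv a separates w from u, hence w ∈ V0
  have hsep_w : isSep G {w} {u} (Sv a) := sep_of_reach hSa_sep hwA
  have hexw : ∃ S, isSep G {w} {u} S := ⟨Sv a, hsep_w⟩
  obtain ⟨hSw_sep, hSw_min, hSw_imp⟩ := hSv w hexw
  have hwV0 : w ∈ V0 := by
    rw [hV0]
    exact ⟨hexw, le_trans (hSw_min (Sv a) hsep_w) hcarda⟩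
  -- R(w) ⊆ A and R(w) ⊆ B
  have hRwA : reachAvoid G (Sv w) {w} ⊆ A := by
    rw [hAeq]
    exact reach_subset_reach hSa_sep hSa_imp hSw_sep hSw_min hwA
  have hRwB : reachAvoid G (Sv w) {w} ⊆ B := by
    rw [hBeq]
    exact reach_subset_reach hSb_sep hSb_imp hSw_sep hSw_min hwB
  by_cases hRA : reachAvoid G (Sv w) {w} = A
  · have hne : reachAvoid G (Sv w) {w} ≠ B := fun h => hAB (hRA.symm.trans h)
    exact hBmin w hwV0 (ssubset_of_subset_of_ne hRwB hne)
  · exact hAmin w hwV0 (ssubset_of_subset_of_ne hRwA hRA)
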